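/- The standard until operator decomposes through the modified until: for any signal x : ℕ → 𝒳, any STL formulae Φ₁, Φ₂, any time instant k ∈ ℕ and any integers 0 ≤ a ≤ b: (x,k) ⊨ Φ₁ U_{[a,b]} Φ₂ if and only if both (x,k) ⊨ Φ₁ U'_{[a,b]} Φ₂ and (x,k) ⊨ G_{[0,a]} Φ₁. -/
import Mathlib

namespace STLFull

/-- STL formulae over signals `ℕ → (Fin n → ℝ)`:
`⊤`, atomic predicates `π^μ`, negation, conjunction, and `until` `U_{[a,b]}`. -/
inductive STL (n : ℕ) : Type
  | top : STL n
  | atom : ((Fin n → ℝ) → ℝ) → STL n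
  | neg : STL n → STL n
  | conj : STL n → STL n → STL n
  | untl : ℕ → ℕ → STL n → STL n → STL n

/-- Semantics of STL: `sat x k Φ` means `(x, k) ⊨ Φ`. -/
def sat {n : ℕ} (x : ℕ → (Fin n → ℝ)) : ℕ → STL n → Prop
  | _, STL.top => True
  | k, STL.atom μ => 0 ≤ μ (x k)
  | k, STL.neg φ => ¬ sat x k φ
  | k, STL.conj φ ψ => sat x k φ ∧ sat x k ψ
  | k, STL.untl a b φ ψ =>
      ∃ k', k + a ≤ k' ∧ k' ≤ k + b ∧ sat x k' ψ ∧ ∀ k'', k ≤ k'' → k'' ≤ k' → sat x k'' φ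

/-- Derived "eventually" operator `F_{[a,b]} Φ := ⊤ U_{[a,b]} Φ`. -/
def evnt {n : ℕ} (a b : ℕ) (φ : STL n) : STL n := STL.untl a b STL.top φ

/-- Derived "always" operator `G_{[a,b]} Φ := ¬ F_{[a,b]} ¬ Φ`. -/
def alws {n : ℕ} (a b : ℕ) (φ : STL n) : STL n := STL.neg (evnt a b (STL.neg φ))

/-- Semantics of the modified until `Φ₁ U'_{[a,b]} Φ₂`:
there is `k' ∈ [k+a, k+b]` with `(x,k') ⊨ Φ₂` and `(x,k'') ⊨ Φ₁` for all `k'' ∈ [k+a, k']`. -/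
def satU' {n : ℕ} (x : ℕ → (Fin n → ℝ)) (k a b : ℕ) (φ ψ : STL n) : Prop :=
  ∃ k', k + a ≤ k' ∧ k' ≤ k + b ∧ sat x k' ψ ∧ ∀ k'', k + a ≤ k'' → k'' ≤ k' → sat x k'' φ

end STLFull

open STLFull

/-- The standard until decomposes through the modified until: for any signal `x`,
STL formulae `Φ₁, Φ₂`, time `k` and integers `0 ≤ a ≤ b`:
`(x,k) ⊨ Φ₁ U_{[a,b]} Φ₂` iff both `(x,k) ⊨ Φ₁ U'_{[a,b]} Φ₂` and `(x,k) ⊨ G_{[0,a]} Φ₁`. -/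
theorem until_iff_until'_and_always {n : ℕ} (x : ℕ → (Fin n → ℝ)) (Φ₁ Φ₂ : STL n)
    (k a b : ℕ) (hab : a ≤ b) :
    sat x k (STL.untl a b Φ₁ Φ₂) ↔ satU' x k a b Φ₁ Φ₂ ∧ sat x k (alws 0 a Φ₁) := by
  simp only [sat, satU', alws, evnt, not_exists]
  constructor
  · rintro ⟨k', h1, h2, h3, h4⟩
    refine ⟨⟨k', h1, h2, h3, fun k'' h5 h6 => h4 k'' (le_trans (Nat.le_add_right _ _) h5) h6⟩,
      fun k' h => ?_⟩
    obtain ⟨hk, hka, hn, -⟩ := h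
    exact hn (h4 k' hk (le_trans hka (by omega)))
  · rintro ⟨⟨k', h1, h2, h3, h4⟩, hG⟩
    refine ⟨k', h1, h2, h3, fun k'' h5 h6 => ?_⟩
    rcases le_or_gt (k + a) k'' with h | h
    · exact h4 k'' h h6
    · by_contra hc
      exact hG k'' ⟨by omega, by omega, hc, fun _ _ _ => trivial⟩
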